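/- Let G be the presented group with two generators a, b and relators [a, [a, b]]·[b⁻¹, [a, b]]⁻¹, [[a, [a, b]], a], and [[a, [a, b]], b] (i.e., G = ⟨a, b | [a,[a,b]] = [b⁻¹,[a,b]] is central⟩). Then the group homomorphism G → Ē determined by a ↦ ((1, 1), 0, 0) and b ↦ ((1, −1), 0, 0) is injective; hence G is isomorphic to the subgroup 𝓔 of Ē generated by ((1,1),0,0) and ((1,−1),0,0). -/

import Mathlib

/-!
Write `c = [a, b]` and `d = [a, c] = [b⁻¹, c]`. Since `d` is central and conjugation by `a` sends
`b ↦ c b` and `c ↦ d c`, the subgroup `⟨b, c⟩` is normalized by `a`; its elements are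
`b^j c^k d^m` because `b⁻¹ c b = d c`, so every element of `G` is `a^i b^j c^k d^m`. In `Ē` the
image of `a^i b^j c^k d^m` has `x + y = 2i` and `x - y = 2j`, and once `i = j = 0` it is
`((0, 0), -2k, -2m)`; hence only the trivial word maps to `1`.
-/

noncomputable section

/-- The Engel Lie group `Ē`: underlying set `ℝ² × ℝ × ℝ`, with coordinates
`(x, y)` (endpoint), `A` (signed area) and `B` (the `y`-moment). -/
@[ext]
structure Engel where
  x : ℝ
  y : ℝ
  A : ℝ
  B : ℝ

namespace Engel

instance : Mul Engel :=
  ⟨fun g h =>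
    ⟨g.x + h.x, g.y + h.y,
     g.A + h.A + (g.x * h.y - g.y * h.x) / 2,
     g.B + h.B + g.y * h.A + (2 * g.y + h.y) * (g.x * h.y - g.y * h.x) / 6⟩⟩

instance : One Engel := ⟨⟨0, 0, 0, 0⟩⟩

instance : Inv Engel := ⟨fun g => ⟨-g.x, -g.y, -g.A, -g.B + g.y * g.A⟩⟩

@[simp] lemma mul_x (g h : Engel) : (g * h).x = g.x + h.x := rfl
@[simp] lemma mul_y (g h : Engel) : (g * h).y = g.y + h.y := rfl
@[simp] lemma mul_A (g h : Engel) :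
    (g * h).A = g.A + h.A + (g.x * h.y - g.y * h.x) / 2 := rfl
@[simp] lemma mul_B (g h : Engel) :
    (g * h).B = g.B + h.B + g.y * h.A
      + (2 * g.y + h.y) * (g.x * h.y - g.y * h.x) / 6 := rfl
@[simp] lemma one_x : (1 : Engel).x = 0 := rfl
@[simp] lemma one_y : (1 : Engel).y = 0 := rfl
@[simp] lemma one_A : (1 : Engel).A = 0 := rfl
@[simp] lemma one_B : (1 : Engel).B = 0 := rfl
@[simp] lemma inv_x (g : Engel) : g⁻¹.x = -g.x := rfl
@[simp] lemma inv_y (g : Engel) : g⁻¹.y = -g.y := rfl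
@[simp] lemma inv_A (g : Engel) : g⁻¹.A = -g.A := rfl
@[simp] lemma inv_B (g : Engel) : g⁻¹.B = -g.B + g.y * g.A := rfl

instance : Group Engel where
  mul_assoc a b c := by ext <;> simp <;> ring
  one_mul a := by ext <;> simp
  mul_one a := by ext <;> simp
  inv_mul_cancel a := by
    ext <;>
      simp only [mul_x, mul_y, mul_A, mul_B, inv_x, inv_y, inv_A, inv_B,
        one_x, one_y, one_A, one_B] <;> ring

/-- `a^t`: the straight segment from `(0,0)` to `(t,t)`. -/
def aPow (t : ℝ) : Engel := ⟨t, t, 0, 0⟩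

/-- `b^t`: the straight segment from `(0,0)` to `(t,-t)`. -/
def bPow (t : ℝ) : Engel := ⟨t, -t, 0, 0⟩

end Engel

namespace Engel

/-- The generator `a` of the free group on `{a, b}` (encoded as `Bool`). -/
def ga : FreeGroup Bool := FreeGroup.of true

/-- The generator `b` of the free group on `{a, b}` (encoded as `Bool`). -/
def gb : FreeGroup Bool := FreeGroup.of false

open scoped commutatorElement

/-- The relators of `G = ⟨a, b | [a,[a,b]] = [b⁻¹,[a,b]] is central⟩`:
`[a, [a, b]]·[b⁻¹, [a, b]]⁻¹`, `[[a, [a, b]], a]` and `[[a, [a, b]], b]`. -/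
def engelRels : Set (FreeGroup Bool) :=
  {⁅ga, ⁅ga, gb⁆⁆ * ⁅gb⁻¹, ⁅ga, gb⁆⁆⁻¹, ⁅⁅ga, ⁅ga, gb⁆⁆, ga⁆, ⁅⁅ga, ⁅ga, gb⁆⁆, gb⁆}

end Engel

open scoped commutatorElement

open Subgroup

section EngelRelations

variable {G : Type*} [Group G]

theorem zpow_mul_zpow_of_inv_mul_mul_eq {x y z : G} (hzx : Commute z x) (hzy : Commute z y)
    (h : x⁻¹ * y * x = z * y) (j k : ℤ) : y ^ k * x ^ j = x ^ j * y ^ k * z ^ (j * k) := by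
  have hsemi : SemiconjBy y x (x * z) := by
    rw [SemiconjBy, mul_assoc, ← h]; group
  have hconj : (x ^ j)⁻¹ * y * x ^ j = z ^ j * y := by
    rw [mul_assoc, (hsemi.zpow_right j).eq, hzx.symm.mul_zpow]; group
  have hconj_zpow : ((x ^ j)⁻¹ * y * x ^ j) ^ k = (x ^ j)⁻¹ * y ^ k * x ^ j := by
    simpa using conj_zpow (a := (x ^ j)⁻¹) (b := y) (i := k)
  calc y ^ k * x ^ j = x ^ j * ((x ^ j)⁻¹ * y * x ^ j) ^ k := by rw [hconj_zpow]; group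
    _ = x ^ j * y ^ k * z ^ (j * k) := by
      rw [hconj, (hzy.zpow_left j).mul_zpow k, ← zpow_mul, (hzy.zpow_zpow _ k).eq, mul_assoc]

theorem Subgroup.mem_normalizer_closure_of_conj_mem {s : Set G} {x : G}
    (hx : ∀ y ∈ s, x * y * x⁻¹ ∈ closure s) (hx' : ∀ y ∈ s, x⁻¹ * y * x ∈ closure s) :
    x ∈ normalizer (closure s) := by
  have hconj {g : G} (hg : ∀ y ∈ s, g * y * g⁻¹ ∈ closure s) {n : G} (hn : n ∈ closure s) :
      g * n * g⁻¹ ∈ closure s :=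
    (closure_le (K := (closure s).comap (MulAut.conj g).toMonoidHom)).mpr hg hn
  refine mem_normalizer_iff.mpr fun n => ⟨hconj hx, fun hn => ?_⟩
  simpa [mul_assoc] using hconj (g := x⁻¹) (by simpa using hx') hn

structure EngelRelations (a b c d : G) : Prop where
  commutator_a_b : ⁅a, b⁆ = c
  commutator_a_c : ⁅a, c⁆ = d
  commutator_inv_b_c : ⁅b⁻¹, c⁆ = d
  commute_a : Commute d a
  commute_b : Commute d b

namespace EngelRelations

variable {a b c d : G}

theorem commute_c (h : EngelRelations a b c d) : Commute d c := by
  rw [← h.commutator_a_b, commutatorElement_def]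
  exact ((h.commute_a.mul_right h.commute_b).mul_right h.commute_a.inv_right).mul_right
    h.commute_b.inv_right

theorem a_mul_b_mul_a_inv (h : EngelRelations a b c d) : a * b * a⁻¹ = c * b := by
  rw [← h.commutator_a_b, commutatorElement_def]; group

theorem a_mul_c_mul_a_inv (h : EngelRelations a b c d) : a * c * a⁻¹ = d * c := by
  rw [← h.commutator_a_c, commutatorElement_def]; group

theorem a_inv_mul_c_mul_a (h : EngelRelations a b c d) : a⁻¹ * c * a = d⁻¹ * c := by
  rw [eq_inv_mul_iff_mul_eq, ← mul_assoc, ← mul_assoc, h.commute_a.inv_right.eq, mul_assoc a⁻¹ d,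
    ← h.a_mul_c_mul_a_inv]
  group

theorem a_inv_mul_b_mul_a (h : EngelRelations a b c d) : a⁻¹ * b * a = c⁻¹ * d * b :=
  calc a⁻¹ * b * a = (a⁻¹ * c * a)⁻¹ * (a⁻¹ * (c * b) * a) := by group
    _ = c⁻¹ * d * b := by rw [h.a_inv_mul_c_mul_a, ← h.a_mul_b_mul_a_inv]; group

theorem b_inv_mul_c_mul_b (h : EngelRelations a b c d) : b⁻¹ * c * b = d * c := by
  rw [← h.commutator_inv_b_c, commutatorElement_def]; group

theorem c_zpow_mul_b_zpow_mul_c_zpow_mul_d_zpow (h : EngelRelations a b c d) (e j k m : ℤ) :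
    c ^ e * (b ^ j * c ^ k * d ^ m) = b ^ j * c ^ (e + k) * d ^ (j * e + m) := by
  rw [← mul_assoc, ← mul_assoc,
    zpow_mul_zpow_of_inv_mul_mul_eq h.commute_b h.commute_c h.b_inv_mul_c_mul_b j e,
    mul_assoc (b ^ j * c ^ e), (h.commute_c.zpow_zpow _ k).eq]
  group

theorem exists_zpow_of_mem_closure_b_c (h : EngelRelations a b c d) {g : G}
    (hg : g ∈ closure {b, c}) : ∃ j k m : ℤ, g = b ^ j * c ^ k * d ^ m := by
  induction hg using closure_induction_left with
  | one => exact ⟨0, 0, 0, by group⟩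
  | mul_left x hx y _ ih =>
    obtain ⟨j, k, m, rfl⟩ := ih
    rcases hx with rfl | rfl
    · exact ⟨j + 1, k, m, by group⟩
    · exact ⟨j, 1 + k, j * 1 + m, by rw [← h.c_zpow_mul_b_zpow_mul_c_zpow_mul_d_zpow, zpow_one]⟩
  | inv_mul_cancel x hx y _ ih =>
    obtain ⟨j, k, m, rfl⟩ := ih
    rcases hx with rfl | rfl
    · exact ⟨j - 1, k, m, by group⟩
    · exact ⟨j, -1 + k, j * -1 + m,
        by rw [← h.c_zpow_mul_b_zpow_mul_c_zpow_mul_d_zpow, zpow_neg_one]⟩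

theorem mem_normalizer_closure_b_c (h : EngelRelations a b c d) :
    a ∈ normalizer (closure {b, c}) := by
  have hb : b ∈ closure {b, c} := subset_closure (Set.mem_insert b {c})
  have hc : c ∈ closure {b, c} := subset_closure (Set.mem_insert_of_mem b rfl)
  have hd : d ∈ closure {b, c} := by
    rw [← h.commutator_inv_b_c, commutatorElement_def]
    exact mul_mem (mul_mem (mul_mem (inv_mem hb) hc) (inv_mem (inv_mem hb))) (inv_mem hc)
  apply mem_normalizer_closure_of_conj_mem <;> rintro y (rfl | rfl)
  · rw [h.a_mul_b_mul_a_inv]; exact mul_mem hc hb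
  · rw [h.a_mul_c_mul_a_inv]; exact mul_mem hd hc
  · rw [h.a_inv_mul_b_mul_a]; exact mul_mem (mul_mem (inv_mem hc) hd) hb
  · rw [h.a_inv_mul_c_mul_a]; exact mul_mem (inv_mem hd) hc

theorem exists_zpow_of_mem_closure (h : EngelRelations a b c d) {g : G}
    (hg : g ∈ closure {a, b}) : ∃ i j k m : ℤ, g = a ^ i * b ^ j * c ^ k * d ^ m := by
  have hle : zpowers a ≤ normalizer (closure {b, c}) := zpowers_le.mpr h.mem_normalizer_closure_b_c
  have hg' : g ∈ zpowers a ⊔ closure {b, c} := by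
    refine (closure_le _).mpr ?_ hg
    rintro y (rfl | rfl)
    · exact mem_sup_left (mem_zpowers y)
    · exact mem_sup_right (subset_closure (Set.mem_insert y {c}))
  rw [← SetLike.mem_coe, coe_mul_of_left_le_normalizer_right _ _ hle] at hg'
  obtain ⟨_, ⟨i, rfl⟩, n, hn, rfl⟩ := hg'
  obtain ⟨j, k, m, rfl⟩ := h.exists_zpow_of_mem_closure_b_c hn
  exact ⟨i, j, k, m, by group⟩

end EngelRelations

end EngelRelations

namespace Engel

theorem zpow_eq_of_y_mul_A_eq_zero (g : Engel) (h : g.y * g.A = 0) (n : ℤ) :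
    g ^ n = ⟨n * g.x, n * g.y, n * g.A, n * g.B⟩ := by
  induction n using Int.induction_on with
  | zero => ext <;> simp
  | succ n ih =>
    rw [zpow_add_one, ih]
    ext <;> simp only [mul_x, mul_y, mul_A, mul_B] <;> push_cast <;>
      first | ring1 | linear_combination (n : ℝ) * h
  | pred n ih =>
    rw [zpow_sub_one, ih]
    ext <;> simp only [mul_x, mul_y, mul_A, mul_B, inv_x, inv_y, inv_A, inv_B] <;> push_cast <;>
      first | ring1 | linear_combination (n + 1 : ℝ) * h

theorem commutator_aPow_bPow (t : ℝ) : ⁅aPow t, bPow t⁆ = ⟨0, 0, -2 * t ^ 2, 0⟩ := by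
  ext <;> simp [commutatorElement_def, aPow, bPow] <;> ring

theorem commutator_aPow_commutator_aPow_bPow (t : ℝ) :
    ⁅aPow t, ⁅aPow t, bPow t⁆⁆ = ⟨0, 0, 0, -2 * t ^ 3⟩ := by
  rw [commutator_aPow_bPow]
  ext <;> simp [commutatorElement_def, aPow]; ring

theorem eq_zero_of_zpow_mul_zpow_mul_zpow_mul_zpow_eq_one {t : ℝ} (ht : t ≠ 0) {i j k m : ℤ}
    (h : aPow t ^ i * bPow t ^ j * ⁅aPow t, bPow t⁆ ^ k * ⁅aPow t, ⁅aPow t, bPow t⁆⁆ ^ m = 1) :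
    i = 0 ∧ j = 0 ∧ k = 0 ∧ m = 0 := by
  rw [commutator_aPow_commutator_aPow_bPow, commutator_aPow_bPow,
    zpow_eq_of_y_mul_A_eq_zero _ (by simp [aPow]), zpow_eq_of_y_mul_A_eq_zero _ (by simp [bPow]),
    zpow_eq_of_y_mul_A_eq_zero _ (by simp), zpow_eq_of_y_mul_A_eq_zero _ (by simp)] at h
  have hx : (i : ℝ) * t + j * t = 0 := by simpa [aPow, bPow] using congrArg x h
  have hy : (i : ℝ) * t - j * t = 0 := by simpa [aPow, bPow, sub_eq_add_neg] using congrArg y h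
  obtain ⟨rfl, rfl⟩ : i = 0 ∧ j = 0 := by
    have hi : (i : ℝ) * t = 0 := by linarith
    have hj : (j : ℝ) * t = 0 := by linarith
    simpa [ht] using And.intro hi hj
  have hk : k = 0 := by simpa [aPow, bPow, ht] using congrArg A h
  have hm : m = 0 := by simpa [aPow, bPow, ht] using congrArg B h
  exact ⟨rfl, rfl, hk, hm⟩

local notation "𝔞" => (PresentedGroup.of true : PresentedGroup engelRels)
local notation "𝔟" => (PresentedGroup.of false : PresentedGroup engelRels)

theorem engelRelations_of : EngelRelations 𝔞 𝔟 ⁅𝔞, 𝔟⁆ ⁅𝔞, ⁅𝔞, 𝔟⁆⁆ := by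
  have h₁ : PresentedGroup.mk engelRels (⁅ga, ⁅ga, gb⁆⁆ * ⁅gb⁻¹, ⁅ga, gb⁆⁆⁻¹) = 1 :=
    PresentedGroup.one_of_mem (.inl rfl)
  have h₂ : PresentedGroup.mk engelRels ⁅⁅ga, ⁅ga, gb⁆⁆, ga⁆ = 1 :=
    PresentedGroup.one_of_mem (.inr (.inl rfl))
  have h₃ : PresentedGroup.mk engelRels ⁅⁅ga, ⁅ga, gb⁆⁆, gb⁆ = 1 :=
    PresentedGroup.one_of_mem (.inr (.inr rfl))
  exact ⟨rfl, rfl, (mul_inv_eq_one.mp h₁).symm, commutatorElement_eq_one_iff_commute.mp h₂,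
    commutatorElement_eq_one_iff_commute.mp h₃⟩

/-- Any group homomorphism from the presented group
`G = ⟨a, b | [a,[a,b]] = [b⁻¹,[a,b]] is central⟩` to `Ē` sending `a` to
`((1, 1), 0, 0)` and `b` to `((1, −1), 0, 0)` is injective, and its range is the
subgroup `𝓔` of `Ē` generated by those two elements; hence `G ≅ 𝓔`. -/
theorem presentedGroup_to_engel_injective
    (φ : PresentedGroup engelRels →* Engel)
    (ha : φ (PresentedGroup.of true) = aPow 1)
    (hb : φ (PresentedGroup.of false) = bPow 1) :
    Function.Injective φ ∧ φ.range = Subgroup.closure {aPow 1, bPow 1} := by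
  have hclosure : closure {𝔞, 𝔟} = ⊤ := by
    rw [← PresentedGroup.closure_range_of, Bool.range_eq, Set.pair_comm]
  refine ⟨(injective_iff_map_eq_one φ).mpr fun g hg => ?_, ?_⟩
  · obtain ⟨i, j, k, m, rfl⟩ :=
      engelRelations_of.exists_zpow_of_mem_closure (hclosure ▸ mem_top g)
    simp only [map_mul, map_zpow, map_commutatorElement, ha, hb] at hg
    obtain ⟨rfl, rfl, rfl, rfl⟩ := eq_zero_of_zpow_mul_zpow_mul_zpow_mul_zpow_eq_one one_ne_zero hg
    simp
  · rw [MonoidHom.range_eq_map, ← hclosure, MonoidHom.map_closure, Set.image_pair, ha, hb]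

end Engel
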